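/- arXiv:1810.09789 — 3 statements merged into one kernel-verified Lean document; each statement's English description precedes it below -/
import Mathlib

section
/- Let G be a 2×2 matrix over a commutative ring and suppose Gf = g, where f and g are 2×1 column vectors having left inverses f̃ᵀ and g̃ᵀ respectively. Then G·(Jf̃) = (g̃ᵀ G J f̃)·g + det(G)·(Jg̃), where J = [[0,−1],[1,0]]. -/
/-!
With `J = [[0,-1],[1,0]]`, the vectors `g` and `J g̃` form a basis dual to `g̃ᵀ` and
`det [g | ·]` whenever `g̃ᵀ g = 1`, so every `v` equals `(g̃ᵀ v) g + det [g | v] J g̃`.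
For `v = G J f̃` the determinant is `det [G f | G J f̃] = det G · det [f | J f̃] = det G · f̃ᵀ f
= det G`.
-/

open Matrix

namespace Matrix

variable {R : Type*} [CommRing R]

theorem eq_dotProduct_smul_add_det_smul {a b : Fin 2 → R} (hba : b ⬝ᵥ a = 1)
    (v : Fin 2 → R) :
    v = (b ⬝ᵥ v) • a + (of ![a, v]).det • ![-(b 1), b 0] := by
  rw [dotProduct, Fin.sum_univ_two] at hba
  ext i
  fin_cases i <;> simp [det_fin_two, dotProduct, Fin.sum_univ_two]
  · linear_combination (-v 0) * hba
  · linear_combination (-v 1) * hba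

theorem det_of_mulVec (G : Matrix (Fin 2) (Fin 2) R) (a v : Fin 2 → R) :
    (of ![G *ᵥ a, G *ᵥ v]).det = G.det * (of ![a, v]).det := by
  have hrows : of ![G *ᵥ a, G *ᵥ v] = of ![a, v] * Gᵀ := by
    ext i j
    fin_cases i <;> simp [mul_apply_eq_vecMul, vecMul_transpose]
  rw [hrows, det_mul, det_transpose, mul_comm]

theorem det_of_rot (a b : Fin 2 → R) :
    (of ![a, ![-(b 1), b 0]]).det = b ⬝ᵥ a := by
  simp [det_fin_two, dotProduct, Fin.sum_univ_two]
  ring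

end Matrix

/-- If `Gf = g` where `f, g` have left inverses `f̃ᵀ, g̃ᵀ`, then
`G·(Jf̃) = (g̃ᵀGJf̃)·g + det G·(Jg̃)`, where `J = [[0,-1],[1,0]]`. -/
theorem G_mulVec_Jft {R : Type*} [CommRing R]
    (G : Matrix (Fin 2) (Fin 2) R) (f g ft gt : Fin 2 → R)
    (hfg : G.mulVec f = g)
    (hft : ft 0 * f 0 + ft 1 * f 1 = 1)
    (hgt : gt 0 * g 0 + gt 1 * g 1 = 1) :
    G.mulVec ![-(ft 1), ft 0] =
      fun i => (gt ⬝ᵥ G.mulVec ![-(ft 1), ft 0]) * g i +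
        G.det * (![-(gt 1), gt 0] i) := by
  have hft' : ft ⬝ᵥ f = 1 := by rwa [dotProduct, Fin.sum_univ_two]
  have hgt' : gt ⬝ᵥ g = 1 := by rwa [dotProduct, Fin.sum_univ_two]
  have hdet : (of ![g, G *ᵥ ![-(ft 1), ft 0]]).det = G.det := by
    rw [← hfg, det_of_mulVec, det_of_rot, hft', mul_one]
  conv_lhs => rw [eq_dotProduct_smul_add_det_smul hgt' (G *ᵥ ![-(ft 1), ft 0]), hdet]
  rfl
end

section
/- Let G be a 2×2 matrix with Gf = g, where f, g are 2×1 vectors with left inverses f̃ᵀ, g̃ᵀ. If a vector φ₊ satisfies Gφ₊ = φ₋ and one sets s = det(G)·det[f φ₊], then det[f φ₊] = det[f (s/det G)·Jf̃] and det[g φ₋] = det[g s·Jg̃]; consequently, if f and g are left invertible, there exist scalars Λ, Λ̃ with φ₊ = Λ f + (s/det G)·Jf̃ and φ₋ = Λ̃ g + s·Jg̃. -/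
/-!
In the plane, a vector `x` decomposes along any `u` with `t ⬝ u = 1` as
`x = (t ⬝ x) u + det[u x] · J t`, and `det[u, c · J t] = c`. With `s / det G = det[f φ₊]`
this gives the claims for `φ₊`; since `det[G u, G v] = det G · det[u v]`, also
`det[g φ₋] = s`, and the same decomposition of `φ₋` along `g` gives those for `φ₋`.
-/

namespace Matrix

variable {R : Type*} [CommRing R]

theorem det_fin_two_mulVec_of (G : Matrix (Fin 2) (Fin 2) R) (u v : Fin 2 → R) :
    !![(G *ᵥ u) 0, (G *ᵥ v) 0; (G *ᵥ u) 1, (G *ᵥ v) 1].det =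
      G.det * !![u 0, v 0; u 1, v 1].det := by
  simp only [det_fin_two_of, det_fin_two G, mulVec, dotProduct, Fin.sum_univ_two]
  ring

theorem det_fin_two_of_mul_rot (u t : Fin 2 → R) (c : R) :
    !![u 0, c * -(t 1); u 1, c * t 0].det = c * (t ⬝ᵥ u) := by
  simp only [det_fin_two_of, dotProduct, Fin.sum_univ_two]
  ring

theorem dotProduct_smul_eq_add_det_smul_rot (u t x : Fin 2 → R) :
    (t ⬝ᵥ u) • x = (t ⬝ᵥ x) • u + !![u 0, x 0; u 1, x 1].det • ![-(t 1), t 0] := by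
  ext i
  fin_cases i <;>
    simp only [det_fin_two_of, dotProduct, Fin.sum_univ_two, Pi.add_apply, Pi.smul_apply,
      smul_eq_mul, Fin.zero_eta, Fin.mk_one, cons_val_zero, cons_val_one] <;> ring

theorem eq_smul_add_det_smul_rot {u t : Fin 2 → R} (h : t ⬝ᵥ u = 1) (x : Fin 2 → R) :
    x = (t ⬝ᵥ x) • u + !![u 0, x 0; u 1, x 1].det • ![-(t 1), t 0] := by
  simpa [h] using dotProduct_smul_eq_add_det_smul_rot u t x

end Matrix

open Matrix in
/-- Let `Gf = g` with `f, g` having left inverses `f̃ᵀ, g̃ᵀ`, and let `Gφ₊ = φ₋`.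
With `s := det G · det [f φ₊]`, one has `det [f φ₊] = det [f (s/det G)·Jf̃]` and
`det [g φ₋] = det [g s·Jg̃]`; consequently there are scalars `Λ, Λ̃` with
`φ₊ = Λf + (s/det G)·Jf̃` and `φ₋ = Λ̃g + s·Jg̃`. -/
theorem kernel_element_representation {K : Type*} [Field K]
    (G : Matrix (Fin 2) (Fin 2) K) (f g ft gt φp φm : Fin 2 → K)
    (hdet : G.det ≠ 0)
    (hfg : G.mulVec f = g) (hφ : G.mulVec φp = φm)
    (hft : ft 0 * f 0 + ft 1 * f 1 = 1)
    (hgt : gt 0 * g 0 + gt 1 * g 1 = 1) :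
    (!![f 0, φp 0; f 1, φp 1]).det =
      (!![f 0, (G.det * (!![f 0, φp 0; f 1, φp 1]).det) / G.det * (-(ft 1));
          f 1, (G.det * (!![f 0, φp 0; f 1, φp 1]).det) / G.det * ft 0]).det ∧
    (!![g 0, φm 0; g 1, φm 1]).det =
      (!![g 0, (G.det * (!![f 0, φp 0; f 1, φp 1]).det) * (-(gt 1));
          g 1, (G.det * (!![f 0, φp 0; f 1, φp 1]).det) * gt 0]).det ∧
    ∃ Λ Λt : K,
      (∀ i, φp i = Λ * f i +
        (G.det * (!![f 0, φp 0; f 1, φp 1]).det) / G.det * (![-(ft 1), ft 0] i)) ∧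
      (∀ i, φm i = Λt * g i +
        (G.det * (!![f 0, φp 0; f 1, φp 1]).det) * (![-(gt 1), gt 0] i)) := by
  have hf : ft ⬝ᵥ f = 1 := by rwa [dotProduct, Fin.sum_univ_two]
  have hg : gt ⬝ᵥ g = 1 := by rwa [dotProduct, Fin.sum_univ_two]
  have hs : !![g 0, φm 0; g 1, φm 1].det = G.det * !![f 0, φp 0; f 1, φp 1].det := by
    rw [← hfg, ← hφ, det_fin_two_mulVec_of]
  rw [mul_div_cancel_left₀ _ hdet, ← hs]
  refine ⟨?_, ?_, ft ⬝ᵥ φp, gt ⬝ᵥ φm, fun i => ?_, fun i => ?_⟩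
  · rw [det_fin_two_of_mul_rot, hf, mul_one]
  · rw [det_fin_two_of_mul_rot, hg, mul_one]
  · exact congrFun (eq_smul_add_det_smul_rot hf φp) i
  · exact congrFun (eq_smul_add_det_smul_rot hg φm) i
end

section
/- Let G be a 2×2 matrix of a.e.-defined functions on ℝ with det G ≠ 0 a.e., and suppose Gf = g with f, g left-invertible 2×1 function vectors satisfying the condition (det G · fᵀ(H₂⁺)²) ∩ (gᵀ(H₂⁻)²) = {0}. Define H₊ = {ψ₊ ∈ (H₂⁺)² : f f̃ᵀ ψ₊ ∈ (H₂⁺)²}, H₋ = {ψ₋ ∈ (H₂⁻)² : g g̃ᵀ ψ₋ ∈ (H₂⁻)²}, and K = f̃ᵀH₊ ∩ g̃ᵀH₋. Then ker T_G = K·f, i.e. the kernel of the Toeplitz operator with symbol G equals the set of products k·f with k ∈ K. -/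
open MeasureTheory Complex Filter Set Matrix

noncomputable section
open scoped Classical

/-- The open upper half-plane. -/
def UHP : Set ℂ := {z : ℂ | 0 < z.im}

/-- The open lower half-plane. -/
def LHP : Set ℂ := {z : ℂ | z.im < 0}

/-- The Hardy space `H₂⁺` of the upper half-plane, viewed as boundary functions on `ℝ`:
square-integrable functions that arise as a.e. vertical boundary limits of a holomorphic
function on `ℂ⁺` with uniformly bounded `L²`-means on horizontal lines. -/
def H2p : Set (ℝ → ℂ) :=
  {f | MemLp f 2 (volume : Measure ℝ) ∧ ∃ F : ℂ → ℂ,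
    DifferentiableOn ℂ F UHP ∧
    (∃ C : ℝ, ∀ y : ℝ, 0 < y → ∫ x : ℝ, ‖F (x + y * Complex.I)‖ ^ 2 ≤ C) ∧
    (∀ᵐ x : ℝ ∂volume, Tendsto (fun y : ℝ => F (x + y * Complex.I))
      (nhdsWithin 0 (Ioi 0)) (nhds (f x)))}

/-- The Hardy space `H₂⁻` of the lower half-plane, as boundary functions on `ℝ`. -/
def H2m : Set (ℝ → ℂ) :=
  {f | MemLp f 2 (volume : Measure ℝ) ∧ ∃ F : ℂ → ℂ,
    DifferentiableOn ℂ F LHP ∧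
    (∃ C : ℝ, ∀ y : ℝ, y < 0 → ∫ x : ℝ, ‖F (x + y * Complex.I)‖ ^ 2 ≤ C) ∧
    (∀ᵐ x : ℝ ∂volume, Tendsto (fun y : ℝ => F (x + y * Complex.I))
      (nhdsWithin 0 (Iio 0)) (nhds (f x)))}

/-- `H∞⁺`: boundary functions of bounded holomorphic functions on the upper half-plane. -/
def HinfP : Set (ℝ → ℂ) :=
  {f | ∃ F : ℂ → ℂ, DifferentiableOn ℂ F UHP ∧
    (∃ C : ℝ, ∀ z ∈ UHP, ‖F z‖ ≤ C) ∧
    (∀ᵐ x : ℝ ∂volume, Tendsto (fun y : ℝ => F (x + y * Complex.I))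
      (nhdsWithin 0 (Ioi 0)) (nhds (f x)))}

/-- `H∞⁻`: boundary functions of bounded holomorphic functions on the lower half-plane. -/
def HinfM : Set (ℝ → ℂ) :=
  {f | ∃ F : ℂ → ℂ, DifferentiableOn ℂ F LHP ∧
    (∃ C : ℝ, ∀ z ∈ LHP, ‖F z‖ ≤ C) ∧
    (∀ᵐ x : ℝ ∂volume, Tendsto (fun y : ℝ => F (x + y * Complex.I))
      (nhdsWithin 0 (Iio 0)) (nhds (f x)))}

/-- An inner function: an `H∞⁺` function of unit modulus a.e. on `ℝ`. -/
def IsInner (θ : ℝ → ℂ) : Prop := θ ∈ HinfP ∧ ∀ᵐ x : ℝ ∂volume, ‖θ x‖ = 1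

/-- `a` divides `b` in `H∞⁺` (for inner functions: `a ⪯ b`). -/
def InnerDiv (a b : ℝ → ℂ) : Prop := ∃ c ∈ HinfP, ∀ᵐ x : ℝ ∂volume, b x = a x * c x

/-- The model space `K_θ = H₂⁺ ∩ θ H₂⁻`. -/
def Kmodel (θ : ℝ → ℂ) : Set (ℝ → ℂ) :=
  {f | f ∈ H2p ∧ ∃ g ∈ H2m, ∀ᵐ x : ℝ ∂volume, f x = θ x * g x}

/-- The kernel of the Toeplitz operator with `2 × 2` symbol `G`: those `φ ∈ (H₂⁺)²`
with `Gφ ∈ (L₂)²` and `P⁺(Gφ) = 0`, i.e. `Gφ ∈ (H₂⁻)²`. -/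
def kerT2 (G : Matrix (Fin 2) (Fin 2) (ℝ → ℂ)) : Set (Fin 2 → ℝ → ℂ) :=
  {φ | (∀ i, φ i ∈ H2p) ∧ ∀ i, (fun x => ∑ j : Fin 2, G i j x * φ j x) ∈ H2m}

/-- The kernel of the Toeplitz operator with scalar symbol `g`: those `φ ∈ H₂⁺`
with `g·φ ∈ H₂⁻`. -/
def kerTs (g : ℝ → ℂ) : Set (ℝ → ℂ) :=
  {f | f ∈ H2p ∧ ∃ v ∈ H2m, ∀ᵐ x : ℝ ∂volume, g x * f x = v x}

/-- An outer function in `H∞⁺`, characterized by `O·H₂⁺` being dense in `H₂⁺`. -/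
def IsOuter (O : ℝ → ℂ) : Prop :=
  O ∈ HinfP ∧ ∀ g ∈ H2p, ∀ ε : ℝ, 0 < ε → ∃ f ∈ H2p,
    eLpNorm (fun x => O x * f x - g x) 2 (volume : Measure ℝ) < ENNReal.ofReal ε

/-- The kernel of the truncated Toeplitz operator `A_h^θ` on the model space `K_θ`:
`φ ∈ K_θ` with `P_θ(hφ) = 0`, i.e. `hφ ∈ θH₂⁺ ⊕ H₂⁻`. -/
def kerTTO (h θ : ℝ → ℂ) : Set (ℝ → ℂ) :=
  {φ | φ ∈ Kmodel θ ∧ ∃ u ∈ H2p, ∃ v ∈ H2m,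
    ∀ᵐ x : ℝ ∂volume, h x * φ x = θ x * u x + v x}

/-- A finite Blaschke product (for the upper half-plane) of degree `n`. -/
def IsFBPdeg (θ : ℝ → ℂ) (n : ℕ) : Prop :=
  ∃ (c : ℂ) (a : Fin n → ℂ), ‖c‖ = 1 ∧ (∀ k, 0 < (a k).im) ∧
    ∀ᵐ x : ℝ ∂volume,
      θ x = c * ∏ k : Fin n, ((x : ℂ) - a k) / ((x : ℂ) - starRingEnd ℂ (a k))

/-- A finite Blaschke product of some degree. -/
def IsFBP (θ : ℝ → ℂ) : Prop := ∃ n : ℕ, IsFBPdeg θ n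

/-- The function `r(ξ) = (ξ - i)/(ξ + i)`. -/
def rfun : ℝ → ℂ := fun x => ((x : ℂ) - Complex.I) / ((x : ℂ) + Complex.I)

/-- The singular inner function `ξ ↦ e^{iμξ}`. -/
def efun (μ : ℝ) : ℝ → ℂ := fun x => Complex.exp (Complex.I * μ * x)

/-- The Smirnov class `N⁺` of the upper half-plane, as boundary functions:
quotients `g/h` with `g, h ∈ H∞⁺` and `h` outer. -/
def SmirnovP (f : ℝ → ℂ) : Prop :=
  ∃ g ∈ HinfP, ∃ h : ℝ → ℂ, IsOuter h ∧ ∀ᵐ x : ℝ ∂volume, f x * h x = g x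

/-- Map a function to its class in `L²(ℝ)` (zero if it is not in `L²`). -/
def toL2 (f : ℝ → ℂ) : Lp ℂ 2 (volume : Measure ℝ) :=
  if hf : MemLp f 2 (volume : Measure ℝ) then hf.toLp f else 0

/-- Map a pair of functions to the corresponding pair of `L²` classes. -/
def Qmap (φ : Fin 2 → ℝ → ℂ) : Fin 2 → Lp ℂ 2 (volume : Measure ℝ) :=
  fun i => toL2 (φ i)

end


/-!
Write `v^⊥ = (v₁, -v₀)`, so that `u ⬝ v^⊥ = u₀v₁ - u₁v₀` and `(Au) ⬝ (Av)^⊥ = det A · (u ⬝ v^⊥)`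
for a `2 × 2` matrix `A`. For `φ ∈ ker T_G` the pair `ψ = φ^⊥ ∈ (H₂⁺)²`, `χ = (Gφ)^⊥ ∈ (H₂⁻)²`
satisfies `det G · fᵀψ = (Gf) ⬝ (Gφ)^⊥ = gᵀχ`, so the trivial-intersection hypothesis and
`det G ≠ 0` give `f ⬝ φ^⊥ = 0`: `φ` is pointwise parallel to `f`, hence `φ = k f` with `k = f̃ᵀφ`.
Then `Gφ = k g` and `k = g̃ᵀ(Gφ)`, so `ψ₊ = φ` and `ψ₋ = Gφ` exhibit `k ∈ K`. Conversely, if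
`k = f̃ᵀψ₊ = g̃ᵀψ₋` then `kf = f f̃ᵀψ₊ ∈ (H₂⁺)²` and `G(kf) = kg = g g̃ᵀψ₋ ∈ (H₂⁻)²`.
-/

open MeasureTheory Complex Filter Set Matrix

lemma H2p_congr_ae {f g : ℝ → ℂ} (h : f =ᵐ[volume] g) (hg : g ∈ H2p) : f ∈ H2p := by
  obtain ⟨hL, F, hd, hC, hlim⟩ := hg
  refine ⟨(memLp_congr_ae h).mpr hL, F, hd, hC, ?_⟩
  filter_upwards [h, hlim] with x hx hFx
  rwa [hx]

lemma H2m_congr_ae {f g : ℝ → ℂ} (h : f =ᵐ[volume] g) (hg : g ∈ H2m) : f ∈ H2m := by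
  obtain ⟨hL, F, hd, hC, hlim⟩ := hg
  refine ⟨(memLp_congr_ae h).mpr hL, F, hd, hC, ?_⟩
  filter_upwards [h, hlim] with x hx hFx
  rwa [hx]

lemma neg_mem_H2p {f : ℝ → ℂ} (hf : f ∈ H2p) : -f ∈ H2p := by
  obtain ⟨hL, F, hd, ⟨C, hC⟩, hlim⟩ := hf
  refine ⟨hL.neg, -F, hd.neg, ⟨C, fun y hy => by simpa using hC y hy⟩, ?_⟩
  filter_upwards [hlim] with x hx
  exact hx.neg

lemma neg_mem_H2m {f : ℝ → ℂ} (hf : f ∈ H2m) : -f ∈ H2m := by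
  obtain ⟨hL, F, hd, ⟨C, hC⟩, hlim⟩ := hf
  refine ⟨hL.neg, -F, hd.neg, ⟨C, fun y hy => by simpa using hC y hy⟩, ?_⟩
  filter_upwards [hlim] with x hx
  exact hx.neg

section Perp

variable {R : Type*}

def perp [Neg R] (v : Fin 2 → R) : Fin 2 → R := ![v 1, -v 0]

lemma perp_mem [Neg R] {S : Set R} (hS : ∀ a ∈ S, -a ∈ S) {v : Fin 2 → R} (hv : ∀ i, v i ∈ S) :
    ∀ i, perp v i ∈ S := by
  intro i
  fin_cases i
  exacts [hv 1, hS _ (hv 0)]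

lemma perp_eval {α : Type*} [Neg R] (φ : Fin 2 → α → R) (x : α) :
    (perp φ · x) = perp (φ · x) := by
  funext i
  fin_cases i <;> rfl

variable [CommRing R]

lemma mulVec_dotProduct_perp_mulVec (A : Matrix (Fin 2) (Fin 2) R) (u v : Fin 2 → R) :
    (A *ᵥ u) ⬝ᵥ perp (A *ᵥ v) = A.det * (u ⬝ᵥ perp v) := by
  simp only [perp, dotProduct, mulVec, det_fin_two, Fin.sum_univ_two, Matrix.cons_val_zero,
    Matrix.cons_val_one]
  ring

lemma eq_smul_of_dotProduct_perp_eq_zero {u v w : Fin 2 → R} (hwu : w ⬝ᵥ u = 1)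
    (huv : u ⬝ᵥ perp v = 0) : v = (w ⬝ᵥ v) • u := by
  simp only [perp, dotProduct, Fin.sum_univ_two, Matrix.cons_val_zero, Matrix.cons_val_one]
    at hwu huv
  refine funext (Fin.forall_fin_two.2 ⟨?_, ?_⟩) <;>
    simp only [Pi.smul_apply, smul_eq_mul, dotProduct, Fin.sum_univ_two]
  · linear_combination (-v 0) * hwu - w 1 * huv
  · linear_combination (-v 1) * hwu + w 0 * huv

end Perp

lemma ae_eq_smul_iff {ι α R : Type*} [Countable ι] [MeasurableSpace α] [Mul R] {μ : Measure α}
    {φ f : ι → α → R} {k : α → R} :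
    (∀ᵐ x ∂μ, (φ · x) = k x • (f · x)) ↔ ∀ i, ∀ᵐ x ∂μ, φ i x = k x * f i x := by
  simp only [← ae_all_iff, funext_iff, Pi.smul_apply, smul_eq_mul]

section ToeplitzKernel

def symbolMul (G : Matrix (Fin 2) (Fin 2) (ℝ → ℂ)) (φ : Fin 2 → ℝ → ℂ) : Fin 2 → ℝ → ℂ :=
  fun i x => ∑ j, G i j x * φ j x

/-- The condition `(det G · fᵀ(H₂⁺)²) ∩ (gᵀ(H₂⁻)²) = {0}`. -/
def DetMulHardyInterTrivial (G : Matrix (Fin 2) (Fin 2) (ℝ → ℂ)) (f g : Fin 2 → ℝ → ℂ) : Prop :=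
  ∀ ψ : Fin 2 → ℝ → ℂ, (∀ i, ψ i ∈ H2p) →
    ∀ χ : Fin 2 → ℝ → ℂ, (∀ i, χ i ∈ H2m) →
    (∀ᵐ x : ℝ ∂volume, (Matrix.of fun i j => G i j x).det *
        ∑ j : Fin 2, f j x * ψ j x = ∑ j : Fin 2, g j x * χ j x) →
    ∀ᵐ x : ℝ ∂volume,
      (Matrix.of fun i j => G i j x).det * ∑ j : Fin 2, f j x * ψ j x = 0

def Hplus (f ft : Fin 2 → ℝ → ℂ) : Set (Fin 2 → ℝ → ℂ) :=
  {ψ | (∀ i, ψ i ∈ H2p) ∧ ∀ i, (fun x => f i x * ∑ j : Fin 2, ft j x * ψ j x) ∈ H2p}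

def Hminus (g gt : Fin 2 → ℝ → ℂ) : Set (Fin 2 → ℝ → ℂ) :=
  {χ | (∀ i, χ i ∈ H2m) ∧ ∀ i, (fun x => g i x * ∑ j : Fin 2, gt j x * χ j x) ∈ H2m}

/-- `K = f̃ᵀH₊ ∩ g̃ᵀH₋`. -/
def scalarKernel (f g ft gt : Fin 2 → ℝ → ℂ) : Set (ℝ → ℂ) :=
  {k | (∃ ψ ∈ Hplus f ft, ∀ᵐ x : ℝ ∂volume, k x = ∑ j : Fin 2, ft j x * ψ j x) ∧
    ∃ χ ∈ Hminus g gt, ∀ᵐ x : ℝ ∂volume, k x = ∑ j : Fin 2, gt j x * χ j x}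

variable {G : Matrix (Fin 2) (Fin 2) (ℝ → ℂ)} {f g ft gt φ : Fin 2 → ℝ → ℂ} {k : ℝ → ℂ}

lemma symbolMul_eval (x : ℝ) :
    (symbolMul G φ · x) = (Matrix.of fun i j => G i j x) *ᵥ (φ · x) := rfl

lemma symbolMul_ae_eq_smul (hGf : ∀ᵐ x, (Matrix.of fun i j => G i j x) *ᵥ (f · x) = (g · x))
    (hφ : ∀ᵐ x, (φ · x) = k x • (f · x)) : ∀ᵐ x, (symbolMul G φ · x) = k x • (g · x) := by
  filter_upwards [hGf, hφ] with x hGfx hφx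
  rw [symbolMul_eval, hφx, mulVec_smul, hGfx]

lemma dotProduct_perp_ae_eq_zero_of_mem_kerT2 (hdet : ∀ᵐ x, (Matrix.of fun i j => G i j x).det ≠ 0)
    (hGf : ∀ᵐ x, (Matrix.of fun i j => G i j x) *ᵥ (f · x) = (g · x))
    (htriv : DetMulHardyInterTrivial G f g) (hφ : φ ∈ kerT2 G) :
    ∀ᵐ x, (f · x) ⬝ᵥ perp (φ · x) = 0 := by
  obtain ⟨hφp, hφm⟩ := hφ
  have hzero := htriv (perp φ) (perp_mem (fun _ => neg_mem_H2p) hφp)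
    (perp (symbolMul G φ)) (perp_mem (fun _ => neg_mem_H2m) hφm) <| by
      filter_upwards [hGf] with x hGfx
      change _ * ((f · x) ⬝ᵥ (perp φ · x)) = (g · x) ⬝ᵥ (perp (symbolMul G φ) · x)
      rw [perp_eval, perp_eval, ← hGfx, symbolMul_eval, mulVec_dotProduct_perp_mulVec]
  filter_upwards [hzero, hdet] with x hx hdetx
  rw [← perp_eval]
  exact (mul_eq_zero.mp hx).resolve_left hdetx

lemma exists_mem_scalarKernel_of_mem_kerT2
    (hdet : ∀ᵐ x, (Matrix.of fun i j => G i j x).det ≠ 0)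
    (hGf : ∀ᵐ x, (Matrix.of fun i j => G i j x) *ᵥ (f · x) = (g · x))
    (hft : ∀ᵐ x, (ft · x) ⬝ᵥ (f · x) = 1) (hgt : ∀ᵐ x, (gt · x) ⬝ᵥ (g · x) = 1)
    (htriv : DetMulHardyInterTrivial G f g) (hφ : φ ∈ kerT2 G) :
    ∃ k ∈ scalarKernel f g ft gt, ∀ᵐ x, (φ · x) = k x • (f · x) := by
  set k : ℝ → ℂ := fun x => (ft · x) ⬝ᵥ (φ · x)
  have hφk : ∀ᵐ x, (φ · x) = k x • (f · x) := by
    filter_upwards [hft, dotProduct_perp_ae_eq_zero_of_mem_kerT2 hdet hGf htriv hφ] with x hx hperp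
    exact eq_smul_of_dotProduct_perp_eq_zero hx hperp
  have hGφk := symbolMul_ae_eq_smul hGf hφk
  have hk_gt : ∀ᵐ x, k x = (gt · x) ⬝ᵥ (symbolMul G φ · x) := by
    filter_upwards [hGφk, hgt] with x hx hgtx
    rw [hx, dotProduct_smul, hgtx, smul_eq_mul, mul_one]
  refine ⟨k, ⟨⟨φ, ⟨hφ.1, fun i => ?_⟩, .of_forall fun _ => rfl⟩,
    ⟨symbolMul G φ, ⟨hφ.2, fun i => ?_⟩, hk_gt⟩⟩, hφk⟩
  · refine H2p_congr_ae ?_ (hφ.1 i)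
    filter_upwards [hφk] with x hx
    change f i x * k x = φ i x
    rw [congrFun hx i, Pi.smul_apply, smul_eq_mul, mul_comm]
  · refine H2m_congr_ae ?_ (hφ.2 i)
    filter_upwards [hGφk, hk_gt] with x hx hkx
    change g i x * ((gt · x) ⬝ᵥ (symbolMul G φ · x)) = symbolMul G φ i x
    rw [← hkx, congrFun hx i, Pi.smul_apply, smul_eq_mul, mul_comm]

lemma mem_kerT2_of_ae_eq_smul (hGf : ∀ᵐ x, (Matrix.of fun i j => G i j x) *ᵥ (f · x) = (g · x))
    (hk : k ∈ scalarKernel f g ft gt) (hφ : ∀ᵐ x, (φ · x) = k x • (f · x)) : φ ∈ kerT2 G := by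
  obtain ⟨⟨ψ, ⟨-, hfψ⟩, hkψ⟩, ⟨χ, ⟨-, hgχ⟩, hkχ⟩⟩ := hk
  refine ⟨fun i => H2p_congr_ae ?_ (hfψ i), fun i => H2m_congr_ae ?_ (hgχ i)⟩
  · filter_upwards [hφ, hkψ] with x hx hkx
    rw [congrFun hx i, Pi.smul_apply, smul_eq_mul, hkx, mul_comm]
  · filter_upwards [symbolMul_ae_eq_smul hGf hφ, hkχ] with x hx hkx
    change symbolMul G φ i x = _
    rw [congrFun hx i, Pi.smul_apply, smul_eq_mul, hkx, mul_comm]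

end ToeplitzKernel

/-- If `Gf = g` with `f, g` left-invertible and
`(det G · fᵀ(H₂⁺)²) ∩ (gᵀ(H₂⁻)²) = {0}`, then `ker T_G = K·f` where
`K = f̃ᵀH₊ ∩ g̃ᵀH₋`, with `H₊ = {ψ₊ ∈ (H₂⁺)² : f f̃ᵀ ψ₊ ∈ (H₂⁺)²}` and
`H₋ = {ψ₋ ∈ (H₂⁻)² : g g̃ᵀ ψ₋ ∈ (H₂⁻)²}`. -/
theorem kerT2_eq_scalarType
    (G : Matrix (Fin 2) (Fin 2) (ℝ → ℂ)) (f g ft gt : Fin 2 → ℝ → ℂ)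
    (hdet : ∀ᵐ x : ℝ ∂volume, (Matrix.of fun i j => G i j x).det ≠ 0)
    (hGf : ∀ᵐ x : ℝ ∂volume, ∀ i, ∑ j : Fin 2, G i j x * f j x = g i x)
    (hft : ∀ᵐ x : ℝ ∂volume, ∑ j : Fin 2, ft j x * f j x = 1)
    (hgt : ∀ᵐ x : ℝ ∂volume, ∑ j : Fin 2, gt j x * g j x = 1)
    (htriv : ∀ ψ : Fin 2 → ℝ → ℂ, (∀ i, ψ i ∈ H2p) →
      ∀ χ : Fin 2 → ℝ → ℂ, (∀ i, χ i ∈ H2m) →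
      (∀ᵐ x : ℝ ∂volume, (Matrix.of fun i j => G i j x).det *
          ∑ j : Fin 2, f j x * ψ j x = ∑ j : Fin 2, g j x * χ j x) →
      ∀ᵐ x : ℝ ∂volume,
        (Matrix.of fun i j => G i j x).det * ∑ j : Fin 2, f j x * ψ j x = 0) :
    kerT2 G = {φ | ∃ k : ℝ → ℂ,
      ((∃ ψ : Fin 2 → ℝ → ℂ, (∀ i, ψ i ∈ H2p) ∧
          (∀ i, (fun x => f i x * ∑ j : Fin 2, ft j x * ψ j x) ∈ H2p) ∧
          ∀ᵐ x : ℝ ∂volume, k x = ∑ j : Fin 2, ft j x * ψ j x) ∧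
       (∃ χ : Fin 2 → ℝ → ℂ, (∀ i, χ i ∈ H2m) ∧
          (∀ i, (fun x => g i x * ∑ j : Fin 2, gt j x * χ j x) ∈ H2m) ∧
          ∀ᵐ x : ℝ ∂volume, k x = ∑ j : Fin 2, gt j x * χ j x)) ∧
      ∀ i, ∀ᵐ x : ℝ ∂volume, φ i x = k x * f i x} := by
  have hGf' : ∀ᵐ x, (Matrix.of fun i j => G i j x) *ᵥ (f · x) = (g · x) :=
    hGf.mono fun _ hx => funext hx
  ext φ
  simp only [mem_ofPred_eq, ← and_assoc, ← ae_eq_smul_iff]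
  exact ⟨exists_mem_scalarKernel_of_mem_kerT2 hdet hGf' hft hgt htriv,
    fun ⟨_, hk, hφk⟩ => mem_kerT2_of_ae_eq_smul hGf' hk hφk⟩
end
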